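/- For every integer n > 1 and real m ≥ 1, one has ∑_{i=0}^{n-1} 1/((n-i)(m+n-i)) ≤ log(1+m)/m + 1/(m+1). -/

import Mathlib

/-!
Reindexing by `j = n - i` turns the sum into `∑_{j=1}^{n} 1/(j(m+j))`. Since
`1/(x(m+x))` is the derivative of `G x = (log x - log (m+x))/m`, each term with `j ≥ 2` is at most
`G j - G (j-1)`; this follows from `1 - 1/r ≤ log r` applied to `r = (j(m+j-1))/((j-1)(m+j))`.
The sum therefore telescopes to at most `1/(m+1) + G n - G 1 ≤ 1/(m+1) + log (1+m)/m`,
as `G n ≤ 0`.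
-/

open Finset Real

theorem Finset.sum_range_natCast_sub {M : Type*} [AddCommMonoid M] (f : ℝ → M) (n : ℕ) :
    ∑ i ∈ range n, f ((n : ℝ) - i) = ∑ j ∈ range n, f ((j : ℝ) + 1) := by
  rw [← sum_range_reflect]
  refine sum_congr rfl fun j hj => ?_
  have hjn : j < n := mem_range.mp hj
  rw [Nat.cast_sub (by omega), Nat.cast_sub (by omega)]
  ring_nf

theorem one_div_mul_add_le_log_sub {a m : ℝ} (ha : 0 < a) (hm : 0 < m) :
    1 / ((a + 1) * (m + a + 1)) ≤
      (log (a + 1) - log (m + a + 1) - (log a - log (m + a))) / m := by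
  set r := (a + 1) * (m + a) / (a * (m + a + 1))
  have hlog : log r = log (a + 1) - log (m + a + 1) - (log a - log (m + a)) := by
    rw [log_div (by positivity) (by positivity), log_mul (by positivity) (by positivity),
      log_mul (by positivity) (by positivity)]
    ring
  have hinv : 1 - r⁻¹ = m / ((a + 1) * (m + a)) := by
    simp only [r, inv_div]
    field_simp
    ring
  rw [← hlog, le_div_iff₀ hm]
  calc 1 / ((a + 1) * (m + a + 1)) * m ≤ m / ((a + 1) * (m + a)) := by
        rw [one_div_mul_eq_div]
        exact div_le_div_of_nonneg_left hm.le (by positivity) (by nlinarith)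
    _ = 1 - r⁻¹ := hinv.symm
    _ ≤ log r := one_sub_inv_le_log_of_pos (by positivity)

theorem sum_range_succ_one_div_mul_add_le {m : ℝ} (hm : 0 < m) (n : ℕ) :
    ∑ j ∈ range (n + 1), 1 / (((j : ℝ) + 1) * (m + j + 1)) ≤
      1 / (m + 1) + (log (1 + m) + log (n + 1) - log (m + n + 1)) / m := by
  induction n with
  | zero => simp [add_comm]
  | succ n ih =>
    have hstep := one_div_mul_add_le_log_sub (a := (n : ℝ) + 1) (by positivity) hm
    rw [sum_range_succ]
    push_cast at hstep ⊢
    calc _ ≤ 1 / (m + 1) + (log (1 + m) + log (n + 1) - log (m + n + 1)) / m +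
          (log (n + 1 + 1) - log (m + (n + 1) + 1) - (log (n + 1) - log (m + (n + 1)))) / m :=
          add_le_add ih hstep
      _ = _ := by ring_nf

theorem stmt_4_general (n : ℕ) (m : ℝ) (hm : 1 ≤ m) :
    ∑ i ∈ Finset.range n, 1 / (((n : ℝ) - i) * (m + (n : ℝ) - i)) ≤
      Real.log (1 + m) / m + 1 / (m + 1) := by
  have hm0 : 0 < m := by linarith
  have hlog : 0 ≤ log (1 + m) := log_nonneg (by linarith)
  rcases n with _ | n
  · simp only [range_zero, sum_empty]
    positivity
  have hreindex := sum_range_natCast_sub (fun x => 1 / (x * (m + x))) (n + 1)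
  simp only [← add_sub_assoc, ← add_assoc] at hreindex
  rw [hreindex]
  have hG : log (n + 1) ≤ log (m + n + 1) := log_le_log (by positivity) (by linarith)
  calc _ ≤ 1 / (m + 1) + (log (1 + m) + log (n + 1) - log (m + n + 1)) / m :=
        sum_range_succ_one_div_mul_add_le hm0 n
    _ ≤ 1 / (m + 1) + log (1 + m) / m := by gcongr; linarith
    _ = _ := add_comm _ _

theorem stmt_4 (n : ℕ) (hn : 1 < n) (m : ℝ) (hm : 1 ≤ m) :
    ∑ i ∈ Finset.range n, 1 / (((n : ℝ) - i) * (m + (n : ℝ) - i)) ≤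
      Real.log (1 + m) / m + 1 / (m + 1) :=
  stmt_4_general n m hm
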